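/- arXiv:1505.03072 — 7 statements merged into one kernel-verified Lean document; each statement's English description precedes it below -/
import Mathlib

section
/- Let n be a positive integer and let p satisfy 0 < p ≤ n^{-2/3}. Then every graph G on n vertices with exactly p·C(n,2) edges contains a full subgraph on at least p^{1/2}·n - 1 vertices; consequently f(n,p) ≥ p^{1/2}·n - 1. -/
open scoped Classical

/-- Number of neighbours of `v` inside `S`. -/
noncomputable def degIn {V : Type*} (G : SimpleGraph V) (S : Finset V) (v : V) : ℕ :=
  (S.filter fun u => G.Adj v u).card

/-- `S` induces a full subgraph for density `p`: every vertex of `S` has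
at least `p * (|S| - 1)` neighbours inside `S`. -/
def IsFull {V : Type*} (G : SimpleGraph V) (p : ℝ) (S : Finset V) : Prop :=
  ∀ v ∈ S, p * ((S.card : ℝ) - 1) ≤ (degIn G S v : ℝ)

/-!
Since `p ≤ n^(-2/3)`, we have `p · √p n ≤ 1`, so a vertex set `S` with `|S| - 1 ≤ √p n` is full as
soon as every vertex of `S` has a neighbour in `S`. The non-isolated vertices span all `p · C(n,2)`
edges, so there are at least `√p (n - 1)` of them; adding them one at a time, each together with a
neighbour, yields such a set with `⌈√p n⌉ - 1` or `⌈√p n⌉` vertices.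
-/

open Finset

theorem isFull_of_forall_exists_adj {V : Type*} {G : SimpleGraph V} {p : ℝ} {S : Finset V}
    (hS : ∀ v ∈ S, ∃ u ∈ S, G.Adj v u) (hp : p * (#S - 1) ≤ 1) : IsFull G p S := by
  intro v hv
  obtain ⟨u, hu, huv⟩ := hS v hv
  have : 0 < degIn G S v := card_pos.mpr ⟨u, mem_filter.mpr ⟨hu, huv⟩⟩
  exact hp.trans (by exact_mod_cast this)

theorem Real.sqrt_mul_sub_one_le_of_mul_choose_two_le {p : ℝ} (hp : 0 ≤ p) {m n : ℕ}
    (h : p * n.choose 2 ≤ m.choose 2) : √p * (n - 1) ≤ m := by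
  rw [Nat.cast_choose_two, Nat.cast_choose_two] at h
  have hsq := Real.mul_self_sqrt hp
  have ht := Real.sqrt_nonneg p
  by_contra! hlt
  have hm : (0 : ℝ) ≤ m := m.cast_nonneg
  have hn : (0 : ℝ) ≤ n - 1 := by nlinarith
  have hsq' : √p * (n - 1) * (√p * (n - 1)) = p * ((n - 1) * (n - 1)) := by
    linear_combination ((n : ℝ) - 1) * (n - 1) * hsq
  -- `m² < p (n - 1)² ≤ p n (n - 1) ≤ m (m - 1)`
  nlinarith [mul_self_lt_mul_self hm hlt, mul_nonneg hp hn]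

theorem mul_sqrt_mul_le_one_of_le_rpow_neg_two_thirds {p : ℝ} (hp : 0 ≤ p) {n : ℕ} (hn : 0 < n)
    (h : p ≤ (n : ℝ) ^ (-(2/3 : ℝ))) : p * √p * n ≤ 1 := by
  have hn' : (0 : ℝ) < n := by exact_mod_cast hn
  have : p * √p = p ^ (3/2 : ℝ) := by
    rw [Real.sqrt_eq_rpow, ← Real.rpow_one_add' hp (by norm_num)]; norm_num
  calc p * √p * n = p ^ (3/2 : ℝ) * n := by rw [this]
    _ ≤ ((n : ℝ) ^ (-(2/3 : ℝ))) ^ (3/2 : ℝ) * n := by gcongr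
    _ = 1 := by
      rw [← Real.rpow_mul hn'.le]; norm_num [Real.rpow_neg_one, hn'.ne']

namespace SimpleGraph

variable {V : Type*} (G : SimpleGraph V)

theorem card_edgeFinset_le_choose_two_card_support [Fintype V] :
    #G.edgeFinset ≤ (#G.support.toFinset).choose 2 := by
  rw [← card_edgeFinset_induce_support, Set.toFinset_card]
  exact card_edgeFinset_le_card_choose_two

theorem exists_forall_exists_adj_le_card_le_succ {T : Finset V} (hT : ∀ v ∈ T, ∃ u, G.Adj v u)
    {k : ℕ} (hk : k ≤ #T) :
    ∃ S : Finset V, (∀ v ∈ S, ∃ u ∈ S, G.Adj v u) ∧ k ≤ #S ∧ #S ≤ k + 1 := by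
  induction k with
  | zero => exact ⟨∅, by simp⟩
  | succ k ih =>
    obtain ⟨S, hS, hkS, hSk⟩ := ih (by omega)
    by_cases hSk' : k + 1 ≤ #S
    · exact ⟨S, hS, hSk', by omega⟩
    obtain ⟨v, hvT, hvS⟩ := exists_mem_notMem_of_card_lt_card (s := S) (t := T) (by omega)
    obtain ⟨u, huv⟩ := hT v hvT
    have hv : v ∉ insert u S := by simp [huv.ne, hvS]
    refine ⟨insert v (insert u S), ?_, ?_, ?_⟩
    · simp only [mem_insert, forall_eq_or_imp, exists_eq_or_imp]
      refine ⟨.inr (.inl huv), .inl huv.symm, fun w hw => ?_⟩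
      obtain ⟨x, hx, hwx⟩ := hS w hw
      exact .inr (.inr ⟨x, hx, hwx⟩)
    · rw [card_insert_of_notMem hv]
      have := card_le_card (subset_insert u S)
      omega
    · rw [card_insert_of_notMem hv]
      have := card_insert_le u S
      omega

theorem exists_isFull_sqrt_mul_sub_one_le_card [Fintype V] {p : ℝ} (hp0 : 0 < p) (hp1 : p ≤ 1)
    (hV : 0 < Fintype.card V) (hpV : p * √p * Fintype.card V ≤ 1)
    (hG : (#G.edgeFinset : ℝ) = p * (Fintype.card V).choose 2) :
    ∃ S : Finset V, IsFull G p S ∧ √p * Fintype.card V - 1 ≤ #S := by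
  set n := Fintype.card V
  set x := √p * n
  have hx : 0 < x := by positivity
  have hx_le : x ≤ (#G.support.toFinset + 1 : ℕ) := by
    have h : p * (n.choose 2 : ℕ) ≤ ((#G.support.toFinset).choose 2 : ℕ) := by
      rw [← hG]; exact_mod_cast G.card_edgeFinset_le_choose_two_card_support
    have := Real.sqrt_mul_sub_one_le_of_mul_choose_two_le hp0.le h
    have := Real.sqrt_le_one.mpr hp1
    push_cast
    linarith
  obtain ⟨k, hk⟩ : ∃ k, k + 1 = ⌈x⌉₊ := ⟨_, Nat.sub_add_cancel (Nat.ceil_pos.mpr hx)⟩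
  have hk_ge : x - 1 ≤ k := by
    have := Nat.le_ceil x
    rw [← hk] at this; push_cast at this; linarith
  have hk_lt : (k : ℝ) < x := by
    have := Nat.ceil_lt_add_one hx.le
    rw [← hk] at this; push_cast at this; linarith
  have hk_le : k ≤ #G.support.toFinset := by
    have := Nat.ceil_le.mpr hx_le
    omega
  obtain ⟨S, hS, hkS, hSk⟩ := G.exists_forall_exists_adj_le_card_le_succ
    (fun v hv => G.mem_support.mp (Set.mem_toFinset.mp hv)) hk_le
  have hkS' : (k : ℝ) ≤ #S := by exact_mod_cast hkS
  have hSk' : (#S : ℝ) ≤ k + 1 := by exact_mod_cast hSk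
  refine ⟨S, isFull_of_forall_exists_adj hS ?_, by linarith⟩
  calc p * (#S - 1) ≤ p * x := by gcongr; linarith
    _ ≤ 1 := by simpa only [x, mul_assoc] using hpV

end SimpleGraph

/-- if `0 < p ≤ n^(-2/3)`, every `n`-vertex graph with exactly `p * C(n,2)`
edges has a full subgraph on at least `p^(1/2) n - 1` vertices. -/
theorem stmt4 (n : ℕ) (hn : 0 < n) (p : ℝ) (hp0 : 0 < p)
    (hp : p ≤ (n : ℝ) ^ (-(2/3 : ℝ)))
    (G : SimpleGraph (Fin n))
    (hG : (G.edgeFinset.card : ℝ) = p * (n.choose 2 : ℕ)) :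
    ∃ S : Finset (Fin n), IsFull G p S ∧ p ^ ((1/2 : ℝ)) * n - 1 ≤ (S.card : ℝ) := by
  have hp1 : p ≤ 1 :=
    hp.trans (Real.rpow_le_one_of_one_le_of_nonpos (by exact_mod_cast hn) (by norm_num))
  rw [← Real.sqrt_eq_rpow]
  simpa using G.exists_isFull_sqrt_mul_sub_one_le_card hp0 hp1 (by simpa using hn)
    (by simpa using mul_sqrt_mul_le_one_of_le_rpow_neg_two_thirds hp0.le hn hp) (by simpa using hG)
end

section
/- Suppose G is a graph of density p that is (p,j)-jumbled for some j > 0. Then G contains a full subgraph on at least disc⁺(G)/j vertices, i.e., f(G) ≥ disc⁺(G)/j. -/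
open scoped Classical

/-- Number of edges of `G` inside `S`. -/
noncomputable def edgesIn {V : Type*} [Fintype V] (G : SimpleGraph V) (S : Finset V) : ℕ :=
  (G.edgeFinset.filter fun e => ∀ v ∈ e, v ∈ S).card

/-- `δ_p(S) = e(S) - p * C(|S|, 2)`. -/
noncomputable def disc {V : Type*} [Fintype V] (G : SimpleGraph V) (p : ℝ) (S : Finset V) : ℝ :=
  (edgesIn G S : ℝ) - p * (S.card.choose 2 : ℕ)

/-- The positive `p`-discrepancy: the maximum of `δ_p` over all vertex subsets. -/
noncomputable def discPlus {V : Type*} [Fintype V] (G : SimpleGraph V) (p : ℝ) : ℝ :=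
  Finset.univ.sup' Finset.univ_nonempty (fun S : Finset V => disc G p S)

/-!
Take `S` maximising `δ_p`. Deleting a vertex `v` from `S` changes `δ_p` by
`p (|S| - 1) - deg_S v`, so maximality forces `deg_S v ≥ p (|S| - 1)`: `S` is full. Jumbledness
then gives `disc⁺(G) = δ_p(S) ≤ j |S|`.
-/

open Finset

namespace SimpleGraph

variable {V : Type*} [Fintype V] (G : SimpleGraph V) {S : Finset V} {v : V}

lemma card_edgesIn_incident_eq_degIn (hv : v ∈ S) :
    #{e ∈ G.edgeFinset | (∀ w ∈ e, w ∈ S) ∧ v ∈ e} = degIn G S v := by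
  symm
  apply card_bij (fun u _ => s(v, u))
  · intro u hu
    simp only [mem_filter] at hu ⊢
    refine ⟨mem_edgeFinset.mpr hu.2, fun w hw => ?_, Sym2.mem_mk_left _ _⟩
    rcases Sym2.mem_iff.mp hw with rfl | rfl
    exacts [hv, hu.1]
  · intro a _ b _ h
    exact Sym2.congr_right.mp h
  · intro e he
    simp only [mem_filter] at he
    obtain ⟨hE, hsub, hve⟩ := he
    refine ⟨Sym2.Mem.other hve, mem_filter.mpr ⟨hsub _ (Sym2.other_mem hve), ?_⟩,
      Sym2.other_spec hve⟩
    rw [← mem_edgeSet, Sym2.other_spec hve]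
    exact mem_edgeFinset.mp hE

lemma edgesIn_eq_edgesIn_erase_add_degIn (hv : v ∈ S) :
    edgesIn G S = edgesIn G (S.erase v) + degIn G S v := by
  have hsplit := card_filter_add_card_filter_not
    (s := {e ∈ G.edgeFinset | ∀ w ∈ e, w ∈ S}) (p := fun e => v ∈ e)
  rw [filter_filter, filter_filter, card_edgesIn_incident_eq_degIn G hv] at hsplit
  have herase : {e ∈ G.edgeFinset | ∀ w ∈ e, w ∈ S.erase v}
      = {e ∈ G.edgeFinset | (∀ w ∈ e, w ∈ S) ∧ v ∉ e} := by
    refine filter_congr fun e _ => ?_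
    simp only [mem_erase]
    exact ⟨fun h => ⟨fun w hw => (h w hw).2, fun hve => (h v hve).1 rfl⟩,
      fun ⟨h, hve⟩ w hw => ⟨fun hwv => hve (hwv ▸ hw), h w hw⟩⟩
  unfold edgesIn
  rw [herase]
  omega

lemma disc_erase (p : ℝ) (hv : v ∈ S) :
    disc G p (S.erase v) = disc G p S - degIn G S v + p * (#S - 1) := by
  have hcard : ((S.erase v).card : ℝ) = #S - 1 := by
    rw [card_erase_of_mem hv, Nat.cast_pred (card_pos.mpr ⟨v, hv⟩)]
  unfold disc
  rw [edgesIn_eq_edgesIn_erase_add_degIn G hv, Nat.cast_choose_two, Nat.cast_choose_two, hcard]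
  push_cast
  ring

lemma isFull_of_disc_erase_le (p : ℝ) (h : ∀ v ∈ S, disc G p (S.erase v) ≤ disc G p S) :
    IsFull G p S := fun v hv => by
  have := disc_erase G p hv
  linarith [h v hv]

lemma exists_disc_eq_discPlus (p : ℝ) : ∃ S : Finset V, disc G p S = discPlus G p := by
  obtain ⟨S, -, hS⟩ := exists_mem_eq_sup' univ_nonempty (disc G p)
  exact ⟨S, hS.symm⟩

lemma disc_le_discPlus (p : ℝ) (S : Finset V) : disc G p S ≤ discPlus G p :=
  le_sup' (disc G p) (mem_univ S)

end SimpleGraph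

open SimpleGraph in
theorem stmt5_general {V : Type*} [Fintype V] (G : SimpleGraph V) (p j : ℝ) (hj : 0 < j)
    (hjum : ∀ S : Finset V, |disc G p S| ≤ j * S.card) :
    ∃ S : Finset V, IsFull G p S ∧ discPlus G p / j ≤ (S.card : ℝ) := by
  obtain ⟨S, hS⟩ := exists_disc_eq_discPlus G p
  refine ⟨S, isFull_of_disc_erase_le G p fun v _ => hS ▸ disc_le_discPlus G p _, ?_⟩
  rw [div_le_iff₀ hj, ← hS, mul_comm]
  exact (le_abs_self _).trans (hjum S)

/-- if `G` has density `p` and is `(p,j)`-jumbled (`|δ_p(X)| ≤ j|X|` for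
all `X`) with `j > 0`, then `G` has a full subgraph on at least `disc⁺(G)/j` vertices. -/
theorem stmt5 {V : Type*} [Fintype V] (G : SimpleGraph V) (p j : ℝ) (hj : 0 < j)
    (hp : (G.edgeFinset.card : ℝ) = p * ((Fintype.card V).choose 2 : ℕ))
    (hjum : ∀ S : Finset V, |disc G p S| ≤ j * S.card) :
    ∃ S : Finset V, IsFull G p S ∧ discPlus G p / j ≤ (S.card : ℝ) :=
  stmt5_general G p j hj hjum
end

section
/- Let G be a graph and let p ∈ [0,1], and suppose j_p(G) > 0. Then f_p(G) ≥ disc_p⁺(G)/j_p(G) and g_p(G) ≥ disc_p(G)/j_p(G). -/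
open scoped Classical

/-- `S` induces a `p`-co-full subgraph: every vertex of `S` has at most
`p * (|S| - 1)` neighbours inside `S`. -/
def IsCoFull {V : Type*} (G : SimpleGraph V) (p : ℝ) (S : Finset V) : Prop :=
  ∀ v ∈ S, (degIn G S v : ℝ) ≤ p * ((S.card : ℝ) - 1)

/-- The negative `p`-discrepancy. -/
noncomputable def discMinus {V : Type*} [Fintype V] (G : SimpleGraph V) (p : ℝ) : ℝ :=
  Finset.univ.sup' Finset.univ_nonempty (fun S : Finset V => -(disc G p S))

/-- The `p`-discrepancy. -/
noncomputable def discAbs {V : Type*} [Fintype V] (G : SimpleGraph V) (p : ℝ) : ℝ :=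
  max (discPlus G p) (discMinus G p)

/-- The `p`-jumbledness: the maximum of `|δ_p(X)|/|X|` over nonempty `X`. -/
noncomputable def jumb {V : Type*} [Fintype V] [Nonempty V] (G : SimpleGraph V) (p : ℝ) : ℝ :=
  Finset.sup' (Finset.univ.filter fun S : Finset V => S.Nonempty)
    (by
      refine ⟨{Classical.arbitrary V}, ?_⟩
      simp)
    (fun S => |disc G p S| / S.card)

lemma edgesIn_erase {V : Type*} [Fintype V] (G : SimpleGraph V) (S : Finset V) (v : V)
    (hv : v ∈ S) : edgesIn G S = edgesIn G (S.erase v) + degIn G S v := by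
  classical
  unfold edgesIn
  have hsplit := Finset.card_filter_add_card_filter_not
    (s := G.edgeFinset.filter fun e => ∀ w ∈ e, w ∈ S) (p := fun e => v ∈ e)
  have h1 : ((G.edgeFinset.filter fun e => ∀ w ∈ e, w ∈ S).filter (fun e => ¬ v ∈ e))
      = G.edgeFinset.filter (fun e => ∀ w ∈ e, w ∈ S.erase v) := by
    ext e
    induction e using Sym2.ind with
    | _ a b =>
      simp only [Finset.mem_filter, Sym2.mem_iff, Finset.mem_erase]
      constructor
      · rintro ⟨⟨he, hall⟩, hne⟩
        push_neg at hne
        exact ⟨he, by rintro w (rfl | rfl)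
                      · exact ⟨fun h => hne.1 h.symm, hall _ (Or.inl rfl)⟩
                      · exact ⟨fun h => hne.2 h.symm, hall _ (Or.inr rfl)⟩⟩
      · rintro ⟨he, hall⟩
        refine ⟨⟨he, fun w hw => (hall w hw).2⟩, ?_⟩
        rintro (rfl | rfl)
        · exact (hall _ (Or.inl rfl)).1 rfl
        · exact (hall _ (Or.inr rfl)).1 rfl
  have h2 : ((G.edgeFinset.filter fun e => ∀ w ∈ e, w ∈ S).filter (fun e => v ∈ e)).card
      = degIn G S v := by
    unfold degIn
    rw [eq_comm]
    apply Finset.card_bij (fun u _ => s(v, u))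
    · rintro u hu
      simp only [Finset.mem_filter] at hu
      simp only [Finset.mem_filter, SimpleGraph.mem_edgeFinset, SimpleGraph.mem_edgeSet,
        Sym2.mem_iff]
      refine ⟨⟨hu.2, ?_⟩, Or.inl trivial⟩
      rintro w (rfl | rfl)
      · exact hv
      · exact hu.1
    · intro u1 h1' u2 h2' heq
      exact Sym2.congr_right.mp heq
    · rintro e he
      induction e using Sym2.ind with
      | _ a b =>
        simp only [Finset.mem_filter, SimpleGraph.mem_edgeFinset,
          SimpleGraph.mem_edgeSet, Sym2.mem_iff] at he
        obtain ⟨⟨hadj, hall⟩, hvm⟩ := he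
        rcases hvm with rfl | rfl
        · exact ⟨b, by simp [Finset.mem_filter, hall b (Or.inr rfl), hadj]⟩
        · exact ⟨a, ⟨by simp [Finset.mem_filter, hall a (Or.inl rfl), hadj.symm],
            Sym2.eq_swap⟩⟩
  rw [← hsplit, h1, h2]
  omega
lemma disc_erase {V : Type*} [Fintype V] (G : SimpleGraph V) (p : ℝ) (S : Finset V) (v : V)
    (hv : v ∈ S) :
    disc G p S = disc G p (S.erase v) + ((degIn G S v : ℝ) - p * ((S.card : ℝ) - 1)) := by
  have hcard : (S.erase v).card = S.card - 1 := Finset.card_erase_of_mem hv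
  obtain ⟨m, hm⟩ : ∃ m, S.card = m + 1 :=
    ⟨S.card - 1, by have : 1 ≤ S.card := Finset.card_pos.mpr ⟨v, hv⟩; omega⟩
  unfold disc
  rw [edgesIn_erase G S v hv, hcard, hm]
  simp only [Nat.add_sub_cancel, Nat.choose_succ_succ, Nat.choose_one_right]
  push_cast
  ring

lemma disc_empty {V : Type*} [Fintype V] (G : SimpleGraph V) (p : ℝ) :
    disc G p (∅ : Finset V) = 0 := by
  have h : edgesIn G (∅ : Finset V) = 0 := by
    unfold edgesIn
    rw [Finset.card_eq_zero, Finset.filter_eq_empty_iff]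
    intro e _
    induction e using Sym2.ind with
    | _ a b =>
      simp only [Sym2.mem_iff, Finset.notMem_empty]
      exact fun h => h a (Or.inl rfl)
  simp [disc, h]

lemma exists_full {V : Type*} [Fintype V] (G : SimpleGraph V) (p : ℝ) (S : Finset V) :
    ∃ T : Finset V, IsFull G p T ∧ disc G p S ≤ disc G p T := by
  induction S using Finset.strongInductionOn with
  | _ S ih =>
    by_cases h : IsFull G p S
    · exact ⟨S, h, le_rfl⟩
    · unfold IsFull at h
      push_neg at h
      obtain ⟨v, hv, hlt⟩ := h
      obtain ⟨T, hT, hle⟩ := ih (S.erase v) (Finset.erase_ssubset hv)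
      refine ⟨T, hT, ?_⟩
      have hde := disc_erase G p S v hv
      linarith

lemma exists_cofull {V : Type*} [Fintype V] (G : SimpleGraph V) (p : ℝ) (S : Finset V) :
    ∃ T : Finset V, IsCoFull G p T ∧ disc G p T ≤ disc G p S := by
  induction S using Finset.strongInductionOn with
  | _ S ih =>
    by_cases h : IsCoFull G p S
    · exact ⟨S, h, le_rfl⟩
    · unfold IsCoFull at h
      push_neg at h
      obtain ⟨v, hv, hlt⟩ := h
      obtain ⟨T, hT, hle⟩ := ih (S.erase v) (Finset.erase_ssubset hv)
      refine ⟨T, hT, ?_⟩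
      have hde := disc_erase G p S v hv
      linarith

lemma abs_disc_le_jumb {V : Type*} [Fintype V] [Nonempty V] (G : SimpleGraph V) (p : ℝ)
    (T : Finset V) : |disc G p T| ≤ jumb G p * T.card := by
  rcases T.eq_empty_or_nonempty with rfl | h
  · simp [disc_empty]
  · have hmem : T ∈ Finset.univ.filter (fun S : Finset V => S.Nonempty) := by
      simp [h]
    have hle : |disc G p T| / T.card ≤ jumb G p :=
      Finset.le_sup' (fun S : Finset V => |disc G p S| / S.card) hmem
    have hc : (0 : ℝ) < T.card := by exact_mod_cast Finset.card_pos.mpr h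
    calc |disc G p T| = |disc G p T| / T.card * T.card := by field_simp
      _ ≤ jumb G p * T.card := by
          exact mul_le_mul_of_nonneg_right hle (le_of_lt hc)


/-- `f_p(G) ≥ disc_p⁺(G)/j_p(G)` and `g_p(G) ≥ disc_p(G)/j_p(G)`. -/
theorem stmt6 {V : Type*} [Fintype V] [Nonempty V] (G : SimpleGraph V) (p : ℝ)
    (hp0 : 0 ≤ p) (hp1 : p ≤ 1) (hj : 0 < jumb G p) :
    (∃ S : Finset V, IsFull G p S ∧ discPlus G p / jumb G p ≤ (S.card : ℝ)) ∧
    (∃ S : Finset V, (IsFull G p S ∨ IsCoFull G p S) ∧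
      discAbs G p / jumb G p ≤ (S.card : ℝ)) := by
  obtain ⟨S0, -, hS0⟩ := Finset.exists_mem_eq_sup' (Finset.univ_nonempty)
    (fun S : Finset V => disc G p S)
  obtain ⟨T0, hT0full, hT0⟩ := exists_full G p S0
  have hplus : discPlus G p ≤ disc G p T0 := by
    rw [discPlus, hS0]; exact hT0
  have habs0 : |disc G p T0| ≤ jumb G p * T0.card := abs_disc_le_jumb G p T0
  have hfirst : discPlus G p / jumb G p ≤ (T0.card : ℝ) := by
    rw [div_le_iff₀ hj]
    calc discPlus G p ≤ disc G p T0 := hplus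
      _ ≤ |disc G p T0| := le_abs_self _
      _ ≤ jumb G p * T0.card := habs0
      _ = (T0.card : ℝ) * jumb G p := mul_comm _ _
  refine ⟨⟨T0, hT0full, hfirst⟩, ?_⟩
  rcases le_total (discMinus G p) (discPlus G p) with hc | hc
  · refine ⟨T0, Or.inl hT0full, ?_⟩
    rw [discAbs, max_eq_left hc]
    exact hfirst
  · obtain ⟨S1, -, hS1⟩ := Finset.exists_mem_eq_sup' (Finset.univ_nonempty)
      (fun S : Finset V => -(disc G p S))
    obtain ⟨T1, hT1co, hT1⟩ := exists_cofull G p S1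
    have hminus : discMinus G p ≤ -(disc G p T1) := by
      rw [discMinus, hS1]; linarith
    have habs1 : |disc G p T1| ≤ jumb G p * T1.card := abs_disc_le_jumb G p T1
    refine ⟨T1, Or.inr hT1co, ?_⟩
    rw [discAbs, max_eq_right hc, div_le_iff₀ hj]
    calc discMinus G p ≤ -(disc G p T1) := hminus
      _ ≤ |disc G p T1| := neg_le_abs _
      _ ≤ jumb G p * T1.card := habs1
      _ = (T1.card : ℝ) * jumb G p := mul_comm _ _
end

section
/- Let G be a graph, p ∈ [0,1], and let X ⊆ V(G) be a set attaining the maximum of δ_p over all vertex subsets, i.e., δ_p(X) = disc_p⁺(G). Then the induced subgraph G[X] is p-full: every vertex of X has at least p(|X|-1) neighbours inside X. -/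
open scoped Classical

/-! Removing a vertex `v` from `X` lowers `δ_p` by exactly `deg_X(v) - p (|X| - 1)`: the edges
lost are those at `v`, and `C(|X|, 2) - C(|X| - 1, 2) = |X| - 1`. Maximality of `δ_p(X)` makes this
difference nonnegative. -/

section EdgesIn

variable {V : Type*} [Fintype V] (G : SimpleGraph V) {X : Finset V} {v : V}

lemma edgesIn_erase_eq_card_filter_not_mem :
    edgesIn G (X.erase v) =
      ((G.edgeFinset.filter fun e => ∀ w ∈ e, w ∈ X).filter fun e => v ∉ e).card := by
  rw [edgesIn]
  congr 1
  ext e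
  simp only [Finset.filter_filter, Finset.mem_filter, Finset.mem_erase]
  constructor
  · rintro ⟨he, hX⟩
    exact ⟨he, fun w hw => (hX w hw).2, fun h => (hX v h).1 rfl⟩
  · rintro ⟨he, hX, hv⟩
    exact ⟨he, fun w hw => ⟨fun h => hv (h ▸ hw), hX w hw⟩⟩

lemma degIn_eq_card_filter_mem (hv : v ∈ X) :
    degIn G X v = ((G.edgeFinset.filter fun e => ∀ w ∈ e, w ∈ X).filter fun e => v ∈ e).card := by
  refine Finset.card_nbij (fun u => s(v, u)) ?_ ?_ ?_
  · intro u hu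
    obtain ⟨huX, hvu⟩ := Finset.mem_filter.mp hu
    simp only [Finset.mem_coe, Finset.mem_filter, SimpleGraph.mem_edgeFinset,
      SimpleGraph.mem_edgeSet, Sym2.forall_mem_pair]
    exact ⟨⟨hvu, hv, huX⟩, Sym2.mem_mk_left v u⟩
  · intro u₁ _ u₂ _ h
    exact Sym2.congr_right.mp h
  · intro e he
    simp only [Finset.mem_coe, Finset.mem_filter, SimpleGraph.mem_edgeFinset] at he
    obtain ⟨⟨he, hX⟩, hve⟩ := he
    obtain ⟨u, rfl⟩ := Sym2.mem_iff_exists.mp hve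
    exact ⟨u, Finset.mem_filter.mpr ⟨hX u (Sym2.mem_mk_right v u), he⟩, rfl⟩

lemma edgesIn_eq_edgesIn_erase_add_degIn (hv : v ∈ X) :
    edgesIn G X = edgesIn G (X.erase v) + degIn G X v := by
  rw [edgesIn_erase_eq_card_filter_not_mem, degIn_eq_card_filter_mem G hv, add_comm,
    Finset.card_filter_add_card_filter_not, edgesIn]

end EdgesIn

section Disc

variable {V : Type*} [Fintype V] (G : SimpleGraph V) (p : ℝ)

lemma disc_eq_disc_erase_add (X : Finset V) {v : V} (hv : v ∈ X) :
    disc G p X = disc G p (X.erase v) + (degIn G X v - p * ((X.card : ℝ) - 1)) := by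
  obtain ⟨m, hm⟩ : ∃ m, X.card = m + 1 := Nat.exists_eq_add_one.mpr (Finset.card_pos.mpr ⟨v, hv⟩)
  rw [disc, disc, edgesIn_eq_edgesIn_erase_add_degIn G hv, Finset.card_erase_of_mem hv, hm,
    Nat.add_sub_cancel, Nat.choose_succ_succ', Nat.choose_one_right]
  push_cast
  ring

lemma disc_le_discPlus (S : Finset V) : disc G p S ≤ discPlus G p :=
  Finset.le_sup' (fun S : Finset V => disc G p S) (Finset.mem_univ S)

end Disc

theorem stmt7_general {V : Type*} [Fintype V] (G : SimpleGraph V) (p : ℝ)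
    (X : Finset V)
    (hX : disc G p X = discPlus G p) :
    IsFull G p X := by
  intro v hv
  have hdecomp := disc_eq_disc_erase_add G p X hv
  have hmax := disc_le_discPlus G p (X.erase v)
  linarith

/-- a vertex subset attaining the maximum positive `p`-discrepancy induces
a `p`-full subgraph. -/
theorem stmt7 {V : Type*} [Fintype V] (G : SimpleGraph V) (p : ℝ)
    (hp0 : 0 ≤ p) (hp1 : p ≤ 1) (X : Finset V)
    (hX : disc G p X = discPlus G p) :
    IsFull G p X :=
  stmt7_general G p X hX
end

section
/- Let G be a graph on n vertices. Then G contains a relatively half-full induced subgraph on ⌊n/2⌋ or ⌊n/2⌋ + 1 vertices. -/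
open scoped Classical

/-- `S` induces a relatively `q`-full subgraph: every `v ∈ S` has at least `q · d_G(v)`
neighbours inside `S`. -/
def RelFull {V : Type*} [Fintype V] (G : SimpleGraph V) (q : ℝ) (S : Finset V) : Prop :=
  ∀ v ∈ S, q * (G.degree v : ℝ) ≤ (degIn G S v : ℝ)

/-!
Take a set `S` of size `⌊n/2⌋` or `⌊n/2⌋ + 1` with the fewest edges between `S` and `Sᶜ`.
A vertex with fewer than half of its neighbours on its own side could be moved to the other
side, strictly decreasing the cut. If `|S| = ⌊n/2⌋ + 1`, every vertex of `S` can be moved, so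
`S` is relatively half-full; if `|S| = ⌊n/2⌋`, every vertex of `Sᶜ` can be moved, and `Sᶜ`,
of size `⌈n/2⌉`, is relatively half-full.
-/

namespace SimpleGraph

variable {V : Type*} (G : SimpleGraph V)

theorem degIn_union_of_disjoint {s t : Finset V} (h : Disjoint s t) (v : V) :
    degIn G (s ∪ t) v = degIn G s v + degIn G t v := by
  rw [degIn, Finset.filter_union, Finset.card_union_of_disjoint (Finset.disjoint_filter_filter h)]
  rfl

theorem degIn_erase_self (S : Finset V) (v : V) : degIn G (S.erase v) v = degIn G S v := by
  rw [degIn, Finset.filter_erase, Finset.erase_eq_of_notMem (by simp)]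
  rfl

theorem sum_degIn_comm (s t : Finset V) :
    ∑ v ∈ s, degIn G t v = ∑ u ∈ t, degIn G s u := by
  simp only [degIn, Finset.card_filter]
  rw [Finset.sum_comm]
  simp only [G.adj_comm]

section Fintype

variable [Fintype V]

theorem degIn_univ (v : V) : degIn G Finset.univ v = G.degree v := by
  simp [degIn, degree, neighborFinset_eq_filter]

theorem degIn_add_degIn_compl (S : Finset V) (v : V) :
    degIn G S v + degIn G Sᶜ v = G.degree v := by
  rw [← degIn_union_of_disjoint G disjoint_compl_right, Finset.union_compl, degIn_univ]

noncomputable def cutSize (S : Finset V) : ℕ :=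
  ∑ v ∈ S, degIn G Sᶜ v

theorem cutSize_compl (S : Finset V) : G.cutSize Sᶜ = G.cutSize S := by
  rw [cutSize, cutSize, compl_compl, sum_degIn_comm]

theorem cutSize_erase {S : Finset V} {v : V} (hv : v ∈ S) :
    (G.cutSize (S.erase v) : ℤ) = G.cutSize S + degIn G S v - degIn G Sᶜ v := by
  have hcompl : (S.erase v)ᶜ = Sᶜ ∪ {v} := by
    ext w
    by_cases w = v <;> simp_all
  have hmoved : ∑ w ∈ S.erase v, degIn G {v} w = degIn G S v := by
    rw [sum_degIn_comm, Finset.sum_singleton, degIn_erase_self]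
  have hsplit : ∑ w ∈ S.erase v, degIn G (Sᶜ ∪ {v}) w
      = ∑ w ∈ S.erase v, degIn G Sᶜ w + degIn G S v := by
    rw [← hmoved, ← Finset.sum_add_distrib]
    exact Finset.sum_congr rfl fun w _ =>
      degIn_union_of_disjoint G (Finset.disjoint_singleton_right.2 (by simpa using hv)) w
  rw [cutSize, cutSize, hcompl, hsplit, ← Finset.add_sum_erase S _ hv]
  push_cast
  ring

theorem degree_le_two_mul_degIn_of_cutSize_le {S : Finset V} {v : V} (hv : v ∈ S)
    (hmin : G.cutSize S ≤ G.cutSize (S.erase v)) : G.degree v ≤ 2 * degIn G S v := by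
  have hmove := G.cutSize_erase hv
  have hdeg := G.degIn_add_degIn_compl S v
  omega

theorem relFull_half_of_forall_cutSize_le {S : Finset V}
    (hmin : ∀ v ∈ S, G.cutSize S ≤ G.cutSize (S.erase v)) : RelFull G (1 / 2) S := by
  intro v hv
  have h : (G.degree v : ℝ) ≤ 2 * degIn G S v := by
    exact_mod_cast G.degree_le_two_mul_degIn_of_cutSize_le hv (hmin v hv)
  linarith

end Fintype

end SimpleGraph

/-- every `n`-vertex graph has a relatively half-full induced subgraph on
`⌊n/2⌋` or `⌊n/2⌋ + 1` vertices. -/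
theorem stmt10 {V : Type*} [Fintype V] (G : SimpleGraph V) :
    ∃ S : Finset V,
      (S.card = Fintype.card V / 2 ∨ S.card = Fintype.card V / 2 + 1) ∧
      RelFull G (1/2 : ℝ) S := by
  set m := Fintype.card V / 2
  set F := Finset.univ.filter fun S : Finset V => S.card = m ∨ S.card = m + 1
  obtain ⟨T, -, hT⟩ := Finset.exists_subset_card_eq (s := Finset.univ) (n := m)
    (by simpa using Nat.div_le_self _ 2)
  obtain ⟨S, hSF, hSmin⟩ := F.exists_min_image G.cutSize ⟨T, by simp [F, hT]⟩
  simp only [F, Finset.mem_filter, Finset.mem_univ, true_and] at hSF hSmin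
  rcases hSF with hS | hS
  · refine ⟨Sᶜ, by rw [Finset.card_compl, hS]; omega, G.relFull_half_of_forall_cutSize_le ?_⟩
    intro v hv
    rw [← Finset.compl_insert, G.cutSize_compl, G.cutSize_compl]
    exact hSmin _ (Or.inr (by rw [Finset.card_insert_of_notMem (Finset.mem_compl.1 hv), hS]))
  · refine ⟨S, Or.inr hS, G.relFull_half_of_forall_cutSize_le fun v hv => ?_⟩
    exact hSmin _ (Or.inl (by rw [Finset.card_erase_of_mem hv, hS]; rfl))
end

section
/- Let G be a d-regular graph on n vertices. Then G contains a full subgraph on ⌊n/2⌋ or ⌊n/2⌋ + 1 vertices. -/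
open scoped Classical

/-- The density of `G`: `e(G) / C(n,2)`. -/
noncomputable def density {V : Type*} [Fintype V] (G : SimpleGraph V) : ℝ :=
  (G.edgeFinset.card : ℝ) / ((Fintype.card V).choose 2 : ℕ)

/-!
Let `m = ⌊n/2⌋` and pick an `m`-set `A` spanning as many edges as possible. Maximality under
swapping `v ∈ A` with `u ∉ A` gives `deg_A u ≤ deg_A v + [u ~ v]`, and regularity gives
`deg_A w + deg_{Aᶜ} w = d = p (n - 1)`. If `A` is not full, some `v ∈ A` has
`deg_A v < p (m - 1)`. For `n = 2m` every vertex of `insert v Aᶜ` then has more than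
`d - p (m - 1) = p m` neighbours inside it. For `n = 2m + 1` the degree `d` is even, so if
`Aᶜ` is not full either, some `u ∉ A` has `deg_{Aᶜ} u ≤ d/2 - 1`, and swapping forces
`deg_A v ≥ d/2 = p m` for all `v ∈ A`, contradicting the choice of `v`.
-/

open Finset

section Swap

variable {V : Type*} (G : SimpleGraph V)

noncomputable def sumDegIn (S : Finset V) : ℕ :=
  ∑ v ∈ S, degIn G S v

def IsDensest (A : Finset V) : Prop :=
  ∀ C : Finset V, C.card = A.card → sumDegIn G C ≤ sumDegIn G A

lemma degIn_insert_self (S : Finset V) (u : V) : degIn G (insert u S) u = degIn G S u := by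
  rw [degIn, filter_insert, if_neg (G.loopless.irrefl u), degIn]

lemma degIn_erase_self (S : Finset V) (v : V) : degIn G (S.erase v) v = degIn G S v := by
  rw [degIn, filter_erase, erase_eq_of_notMem fun h => G.loopless.irrefl v (mem_filter.mp h).2,
    degIn]

lemma degIn_insert {S : Finset V} {u : V} (hu : u ∉ S) (w : V) :
    degIn G (insert u S) w = degIn G S w + if G.Adj w u then 1 else 0 := by
  unfold degIn
  rw [filter_insert]
  split_ifs
  · rw [card_insert_of_notMem (by simp [hu])]
  · rfl

lemma degIn_eq_sum_ite (S : Finset V) (u : V) :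
    degIn G S u = ∑ v ∈ S, if G.Adj v u then 1 else 0 := by
  rw [degIn, card_filter]
  exact sum_congr rfl fun v _ => if_congr (G.adj_comm u v) rfl rfl

lemma sumDegIn_insert {S : Finset V} {u : V} (hu : u ∉ S) :
    sumDegIn G (insert u S) = sumDegIn G S + 2 * degIn G S u := by
  have hS : ∀ v ∈ S, degIn G (insert u S) v = degIn G S v + if G.Adj v u then 1 else 0 :=
    fun v _ => degIn_insert G hu v
  rw [sumDegIn, sum_insert hu, degIn_insert_self, sum_congr rfl hS, sum_add_distrib,
    ← degIn_eq_sum_ite, sumDegIn]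
  ring

lemma exists_isDensest_of_card_le [Fintype V] {m : ℕ} (hm : m ≤ Fintype.card V) :
    ∃ A : Finset V, A.card = m ∧ IsDensest G A := by
  have hne : (univ.powersetCard m : Finset (Finset V)).Nonempty := by
    rwa [powersetCard_nonempty, card_univ]
  obtain ⟨A, hA, hmax⟩ := exists_max_image _ (sumDegIn G) hne
  have hAcard : A.card = m := mem_powersetCard_univ.mp hA
  exact ⟨A, hAcard, fun C hC => hmax C (mem_powersetCard_univ.mpr (hC.trans hAcard))⟩

variable {G}

/-- Swapping `v ∈ A` for `u ∉ A` changes `sumDegIn` by `2 (deg_{A-v} u - deg_A v)`. -/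
lemma IsDensest.degIn_le {A : Finset V} (hA : IsDensest G A) {v u : V} (hv : v ∈ A)
    (hu : u ∉ A) : degIn G A u ≤ degIn G A v + if G.Adj u v then 1 else 0 := by
  set A' := A.erase v
  have hvA' : v ∉ A' := notMem_erase v A
  have huA' : u ∉ A' := fun h => hu (mem_of_mem_erase h)
  have hins : insert v A' = A := insert_erase hv
  have hcard : (insert u A').card = A.card := by
    rw [card_insert_of_notMem huA', card_erase_add_one hv]
  have hsumA : sumDegIn G A = sumDegIn G A' + 2 * degIn G A v := by
    rw [← degIn_erase_self G A v, ← sumDegIn_insert G hvA', hins]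
  have hswap := hA _ hcard
  rw [sumDegIn_insert G huA', hsumA] at hswap
  rw [← hins, degIn_insert G hvA', hins]
  omega

end Swap

section Regular

variable {V : Type*} [Fintype V] {G : SimpleGraph V} {d : ℕ}

lemma degIn_add_degIn_compl (hreg : G.IsRegularOfDegree d) (A : Finset V) (w : V) :
    degIn G A w + degIn G Aᶜ w = d := by
  rw [degIn, degIn, ← card_union_of_disjoint (disjoint_filter_filter disjoint_compl_right),
    ← filter_union, union_compl,
    ← G.neighborFinset_eq_filter, G.card_neighborFinset_eq_degree, hreg w]

lemma card_mul_eq_two_mul_card_edgeFinset (hreg : G.IsRegularOfDegree d) :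
    Fintype.card V * d = 2 * #G.edgeFinset := by
  rw [← G.sum_degrees_eq_twice_card_edges, sum_congr rfl fun v _ => hreg v, sum_const,
    smul_eq_mul, card_univ]

lemma even_of_odd_card (hreg : G.IsRegularOfDegree d) (hodd : Odd (Fintype.card V)) :
    Even d := by
  have h : Even (Fintype.card V * d) :=
    ⟨#G.edgeFinset, by rw [card_mul_eq_two_mul_card_edgeFinset hreg]; ring⟩
  exact (Nat.even_mul.mp h).resolve_left (Nat.not_even_iff_odd.mpr hodd)

lemma density_nonneg : 0 ≤ density G := by
  unfold density
  positivity

lemma density_mul_card_sub_one (hreg : G.IsRegularOfDegree d) (hn : 2 ≤ Fintype.card V) :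
    density G * ((Fintype.card V : ℝ) - 1) = d := by
  have hE : (Fintype.card V : ℝ) * d = 2 * #G.edgeFinset := by
    exact_mod_cast card_mul_eq_two_mul_card_edgeFinset hreg
  have hn' : (2 : ℝ) ≤ Fintype.card V := by exact_mod_cast hn
  have hpairs : (Fintype.card V : ℝ) * ((Fintype.card V : ℝ) - 1) / 2 ≠ 0 := by
    have : (0 : ℝ) < (Fintype.card V : ℝ) * ((Fintype.card V : ℝ) - 1) := by nlinarith
    positivity
  rw [density, Nat.cast_choose_two, div_mul_eq_mul_div, div_eq_iff hpairs]
  linear_combination (-((Fintype.card V : ℝ) - 1) / 2) * hE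

lemma IsDensest.le_degIn_insert_compl_add_degIn (hreg : G.IsRegularOfDegree d)
    {A : Finset V} (hA : IsDensest G A) {v w : V} (hv : v ∈ A) (hw : w ∈ insert v Aᶜ) :
    d ≤ degIn G (insert v Aᶜ) w + degIn G A v := by
  have hvc : v ∉ Aᶜ := by simpa using hv
  rcases mem_insert.mp hw with rfl | hwc
  · rw [degIn_insert_self]
    have := degIn_add_degIn_compl hreg A w
    omega
  · rw [degIn_insert G hvc]
    have hsplit := degIn_add_degIn_compl hreg A w
    have hswap := hA.degIn_le hv (mem_compl.mp hwc)
    split_ifs at hswap ⊢ <;> omega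

lemma IsDensest.le_degIn_compl_add_degIn_add_one (hreg : G.IsRegularOfDegree d)
    {A : Finset V} (hA : IsDensest G A) {v u : V} (hv : v ∈ A) (hu : u ∉ A) :
    d ≤ degIn G Aᶜ u + degIn G A v + 1 := by
  have hsplit := degIn_add_degIn_compl hreg A u
  have hswap := hA.degIn_le hv hu
  split_ifs at hswap <;> omega

lemma IsDensest.isFull_insert_compl (hreg : G.IsRegularOfDegree d) {A : Finset V}
    (hA : IsDensest G A) (hn : Fintype.card V = 2 * A.card) {v : V} (hv : v ∈ A)
    (hv' : (degIn G A v : ℝ) < density G * ((A.card : ℝ) - 1)) :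
    IsFull G (density G) (insert v Aᶜ) := by
  have hcard : (insert v Aᶜ).card = A.card + 1 := by
    rw [card_insert_of_notMem (by simpa using hv), card_compl]
    omega
  have hpd := density_mul_card_sub_one hreg (by have := card_pos.mpr ⟨v, hv⟩; omega)
  rw [hn] at hpd
  intro w hw
  have hle : (d : ℝ) ≤ degIn G (insert v Aᶜ) w + degIn G A v := by
    exact_mod_cast hA.le_degIn_insert_compl_add_degIn hreg hv hw
  rw [hcard]
  push_cast at hpd ⊢
  linarith

lemma IsDensest.isFull_of_not_isFull_compl (hreg : G.IsRegularOfDegree d) {A : Finset V}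
    (hA : IsDensest G A) (hn : Fintype.card V = 2 * A.card + 1)
    (hAc : ¬ IsFull G (density G) Aᶜ) : IsFull G (density G) A := by
  intro v hv
  have hpd := density_mul_card_sub_one hreg (by have := card_pos.mpr ⟨v, hv⟩; omega)
  rw [hn] at hpd
  push_cast at hpd
  have hcard : (Aᶜ.card : ℝ) = A.card + 1 := by
    rw [card_compl]
    exact_mod_cast (by omega : Fintype.card V - A.card = A.card + 1)
  obtain ⟨u, hu, hu'⟩ : ∃ u ∈ Aᶜ, (degIn G Aᶜ u : ℝ) < density G * A.card := by
    simpa [IsFull, hcard] using hAc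
  obtain ⟨t, ht⟩ := even_of_odd_card hreg ⟨A.card, hn⟩
  have hu_lt : 2 * degIn G Aᶜ u < d := by
    have : (2 * degIn G Aᶜ u : ℝ) < d := by linarith
    exact_mod_cast this
  have hle := hA.le_degIn_compl_add_degIn_add_one hreg hv (mem_compl.mp hu)
  have hhalf : (t : ℝ) ≤ degIn G A v := by exact_mod_cast (by omega : t ≤ degIn G A v)
  have ht' : (d : ℝ) = 2 * t := by exact_mod_cast (by omega : d = 2 * t)
  nlinarith [density_nonneg (G := G)]

end Regular

/-- every `d`-regular graph on `n` vertices has a full subgraph on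
`⌊n/2⌋` or `⌊n/2⌋ + 1` vertices. -/
theorem stmt11 {V : Type*} [Fintype V] (G : SimpleGraph V) (d : ℕ)
    (hreg : G.IsRegularOfDegree d) :
    ∃ S : Finset V,
      (S.card = Fintype.card V / 2 ∨ S.card = Fintype.card V / 2 + 1) ∧
      IsFull G (density G) S := by
  obtain ⟨A, hAcard, hA⟩ := exists_isDensest_of_card_le G (Nat.div_le_self _ 2)
  by_cases hAfull : IsFull G (density G) A
  · exact ⟨A, Or.inl hAcard, hAfull⟩
  rcases Nat.even_or_odd (Fintype.card V) with heven | hodd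
  · obtain ⟨v, hv, hv'⟩ : ∃ v ∈ A, (degIn G A v : ℝ) < density G * ((A.card : ℝ) - 1) := by
      simpa [IsFull] using hAfull
    have hn : Fintype.card V = 2 * A.card := by
      rw [hAcard, Nat.two_mul_div_two_of_even heven]
    refine ⟨insert v Aᶜ, Or.inr ?_, hA.isFull_insert_compl hreg hn hv hv'⟩
    rw [card_insert_of_notMem (by simpa using hv), card_compl, hn, hAcard]
    omega
  · have hn : Fintype.card V = 2 * A.card + 1 := by
      rw [hAcard, Nat.two_mul_div_two_add_one_of_odd hodd]
    by_cases hAc : IsFull G (density G) Aᶜ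
    · refine ⟨Aᶜ, Or.inr ?_, hAc⟩
      rw [card_compl, hAcard]
      omega
    exact absurd (hA.isFull_of_not_isFull_compl hreg hn hAc) hAfull
end

section
/- Let W = (V, w) be a weighted graph on n vertices, where w assigns to each unordered pair of distinct vertices a weight in [0,1]. Then W contains a relatively half-full subset on ⌊n/2⌋ or ⌊n/2⌋ + 1 vertices: a subset H ⊆ V with |H| ∈ {⌊n/2⌋, ⌊n/2⌋ + 1} such that for every x ∈ H, the sum of w({x,y}) over y ∈ H \ {x} is at least (1/2) times the sum of w({x,y}) over all y ∈ V \ {x}. -/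
open scoped Classical

/-! A set `S` with `|S| ∈ {⌊n/2⌋, ⌊n/2⌋ + 1}` of minimum cut weight `w(S, Sᶜ)` does the job.
Moving a single vertex `x` across the cut changes its weight by `d_S(x) - d_{Sᶜ}(x)` (up to sign),
so minimality forces `x` to have at least half of its degree on its own side. If `|S| = ⌊n/2⌋ + 1`
one may remove any vertex of `S` and stay in the admissible family, so `S` itself is relatively
half-full; if `|S| = ⌊n/2⌋` one may add any vertex of `Sᶜ`, so `Sᶜ` is relatively half-full,
and `|Sᶜ| = ⌈n/2⌉` is admissible as well. -/

namespace WeightedGraph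

open Finset

variable {V : Type*} [Fintype V] (w : V → V → ℝ)

noncomputable def wdeg (Y : Finset V) (x : V) : ℝ :=
  ∑ y ∈ Y.erase x, w x y

def IsRelFull (q : ℝ) (H : Finset V) : Prop :=
  ∀ x ∈ H, q * wdeg w univ x ≤ wdeg w H x

noncomputable def cutWeight (S : Finset V) : ℝ :=
  ∑ x ∈ S, ∑ y ∈ Sᶜ, w x y

variable {w}

lemma wdeg_add_wdeg_compl (S : Finset V) (x : V) :
    wdeg w S x + wdeg w Sᶜ x = wdeg w univ x := by
  have hdisj : Disjoint (S.erase x) (Sᶜ.erase x) :=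
    disjoint_compl_right.mono (erase_subset x S) (erase_subset x Sᶜ)
  rw [wdeg, wdeg, wdeg, ← sum_union hdisj, ← erase_union_distrib, union_compl]

lemma cutWeight_compl (hsymm : ∀ x y, w x y = w y x) (S : Finset V) :
    cutWeight w Sᶜ = cutWeight w S := by
  rw [cutWeight, cutWeight, compl_compl, sum_comm]
  exact sum_congr rfl fun x _ => sum_congr rfl fun y _ => hsymm y x

lemma cutWeight_insert (hsymm : ∀ x y, w x y = w y x) {S : Finset V} {x : V} (hx : x ∉ S) :
    cutWeight w (insert x S) = cutWeight w S + wdeg w Sᶜ x - wdeg w S x := by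
  have hxc : x ∈ Sᶜ := mem_compl.mpr hx
  have hcut : cutWeight w S = ∑ a ∈ S, ∑ b ∈ Sᶜ.erase x, w a b + wdeg w S x := by
    rw [cutWeight, wdeg, erase_eq_of_notMem hx, ← sum_add_distrib]
    refine sum_congr rfl fun a _ => ?_
    rw [hsymm x a, sum_erase_add _ _ hxc]
  rw [cutWeight, compl_insert, sum_insert hx, hcut]
  simp only [wdeg]
  ring

lemma wdeg_le_wdeg_compl_of_cutWeight_le_insert (hsymm : ∀ x y, w x y = w y x)
    {S : Finset V} {x : V} (hx : x ∉ S)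
    (hmin : cutWeight w S ≤ cutWeight w (insert x S)) : wdeg w S x ≤ wdeg w Sᶜ x := by
  rw [cutWeight_insert hsymm hx] at hmin
  linarith

lemma isRelFull_half_compl_of_forall_cutWeight_le_insert (hsymm : ∀ x y, w x y = w y x)
    {S : Finset V}
    (hmin : ∀ x ∉ S, cutWeight w S ≤ cutWeight w (insert x S)) : IsRelFull w (1 / 2) Sᶜ := by
  intro x hx
  have hxS : x ∉ S := mem_compl.mp hx
  have hle := wdeg_le_wdeg_compl_of_cutWeight_le_insert hsymm hxS (hmin x hxS)
  have hsplit := wdeg_add_wdeg_compl (w := w) S x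
  linarith

lemma isRelFull_half_of_forall_cutWeight_le_erase (hsymm : ∀ x y, w x y = w y x)
    {S : Finset V}
    (hmin : ∀ x ∈ S, cutWeight w S ≤ cutWeight w (S.erase x)) : IsRelFull w (1 / 2) S := by
  rw [← compl_compl S]
  refine isRelFull_half_compl_of_forall_cutWeight_le_insert hsymm fun x hx => ?_
  -- adding `x` to `Sᶜ` is the complement of removing it from `S`
  rw [cutWeight_compl hsymm, ← compl_erase, cutWeight_compl hsymm]
  exact hmin x (by simpa using hx)

end WeightedGraph

open WeightedGraph Finset in
theorem stmt15_general {V : Type*} [Fintype V] (w : V → V → ℝ)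
    (hsymm : ∀ x y : V, w x y = w y x) :
    ∃ H : Finset V,
      (H.card = Fintype.card V / 2 ∨ H.card = Fintype.card V / 2 + 1) ∧
      ∀ x ∈ H,
        (1/2 : ℝ) * ∑ y ∈ Finset.univ.erase x, w x y ≤ ∑ y ∈ H.erase x, w x y := by
  set k := Fintype.card V / 2
  set F := (univ : Finset (Finset V)).filter fun S => S.card = k ∨ S.card = k + 1
  have hmemF (S : Finset V) : S ∈ F ↔ S.card = k ∨ S.card = k + 1 := by simp [F]
  obtain ⟨S₀, -, hS₀⟩ := exists_subset_card_eq (s := (univ : Finset V)) (n := k)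
    (by rw [card_univ]; exact Nat.div_le_self _ 2)
  obtain ⟨S, hSF, hSmin⟩ := F.exists_min_image (cutWeight w) ⟨S₀, (hmemF S₀).mpr (.inl hS₀)⟩
  rcases (hmemF S).mp hSF with hS | hS
  · refine ⟨Sᶜ, by rw [card_compl, hS]; omega, ?_⟩
    refine isRelFull_half_compl_of_forall_cutWeight_le_insert hsymm fun x hx => hSmin _ ?_
    exact (hmemF _).mpr (.inr (by rw [card_insert_of_notMem hx, hS]))
  · refine ⟨S, .inr hS, ?_⟩
    refine isRelFull_half_of_forall_cutWeight_le_erase hsymm fun x hx => hSmin _ ?_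
    exact (hmemF _).mpr (.inl (by rw [card_erase_of_mem hx, hS]; rfl))

/-- every weighted graph `(V, w)` with symmetric pair-weights in `[0,1]`
contains a relatively half-full subset `H` on `⌊n/2⌋` or `⌊n/2⌋ + 1` vertices: for every
`x ∈ H`, the weighted degree of `x` inside `H` is at least half its weighted degree in `V`. -/
theorem stmt15 {V : Type*} [Fintype V] (w : V → V → ℝ)
    (hsymm : ∀ x y : V, w x y = w y x)
    (h0 : ∀ x y : V, x ≠ y → 0 ≤ w x y)
    (h1 : ∀ x y : V, x ≠ y → w x y ≤ 1) :
    ∃ H : Finset V,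
      (H.card = Fintype.card V / 2 ∨ H.card = Fintype.card V / 2 + 1) ∧
      ∀ x ∈ H,
        (1/2 : ℝ) * ∑ y ∈ Finset.univ.erase x, w x y ≤ ∑ y ∈ H.erase x, w x y :=
  stmt15_general w hsymm
end
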